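/- arXiv:1108.3658 — 7 statements merged into one kernel-verified Lean document; each statement's English description precedes it below -/
import Mathlib

section
/- A quasigroup satisfying the Moufang identity $x((yz)x) = (xy)(zx)$ has a two-sided neutral element, i.e., is a loop. -/
/-!
Cancelling `x` on both sides of the Moufang identity with `y = x \ x` shows that `x \ x` is a left
neutral element `e`. With `x = e` the identity becomes `(yz)e = y(ze)`; taking `y = w / e` and `z = e`
gives `we = ((w / e)e)e = (w / e)(ee) = w`.
-/

section MoufangQuasigroup

variable {Q : Type*} {mul : Q → Q → Q}

theorem moufang_ld_self_mul_eq {ld rd : Q → Q → Q}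
    (hQ1 : ∀ x y, ld x (mul x y) = y) (hQ2 : ∀ x y, mul x (ld x y) = y)
    (hQ3 : ∀ x y, rd (mul x y) y = x)
    (hid : ∀ x y z, mul x (mul (mul y z) x) = mul (mul x y) (mul z x)) (x z : Q) :
    mul (ld x x) z = z := by
  have hx : mul x (mul (mul (ld x x) z) x) = mul x (mul z x) := by
    rw [hid, hQ2]
  have hzx : mul (mul (ld x x) z) x = mul z x :=
    Function.LeftInverse.injective (hQ1 x) hx
  exact Function.LeftInverse.injective (g := fun t => rd t x) (hQ3 · x) hzx

theorem moufang_mul_mul_of_left_neutral {e : Q} (he : ∀ z, mul e z = z)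
    (hid : ∀ x y z, mul x (mul (mul y z) x) = mul (mul x y) (mul z x)) (y z : Q) :
    mul (mul y z) e = mul y (mul z e) := by
  simpa only [he] using hid e y z

theorem moufang_mul_eq_self_of_left_neutral {rd : Q → Q → Q}
    (hQ4 : ∀ x y, mul (rd x y) y = x) {e : Q} (he : ∀ z, mul e z = z)
    (hid : ∀ x y z, mul x (mul (mul y z) x) = mul (mul x y) (mul z x)) (w : Q) :
    mul w e = w := by
  calc mul w e = mul (mul (rd w e) e) e := by rw [hQ4]
    _ = mul (rd w e) (mul e e) := moufang_mul_mul_of_left_neutral he hid _ _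
    _ = w := by rw [he, hQ4]

end MoufangQuasigroup

theorem moufang_quasigroup_is_loop_M1 (Q : Type*) (mul ld rd : Q → Q → Q)
    (hQ1 : ∀ x y, ld x (mul x y) = y) (hQ2 : ∀ x y, mul x (ld x y) = y)
    (hQ3 : ∀ x y, rd (mul x y) y = x) (hQ4 : ∀ x y, mul (rd x y) y = x)
    [Nonempty Q]
    (hid : ∀ x y z, mul x (mul (mul y z) x) = mul (mul x y) (mul z x)) :
    ∃ e : Q, ∀ x, mul e x = x ∧ mul x e = x := by
  obtain ⟨x₀⟩ := ‹Nonempty Q›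
  have hleft : ∀ z, mul (ld x₀ x₀) z = z := moufang_ld_self_mul_eq hQ1 hQ2 hQ3 hid x₀
  exact ⟨ld x₀ x₀, fun x => ⟨hleft x, moufang_mul_eq_self_of_left_neutral hQ4 hleft hid x⟩⟩
end

section
/- In a loop, the four Moufang identities $x((yz)x)=(xy)(zx)$, $(x(yz))x=(xy)(zx)$, $x(y(xz))=((xy)x)z$, and $((xy)z)y=x(y(zy))$ are pairwise equivalent: if a loop satisfies any one of them, it satisfies all four. -/
/-!
`Moufang₁` and `Moufang₂` specialise (at `z = 1`, resp. `y = 1`) to flexibility, under which they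
coincide. Both `Moufang₂` and `Moufang₃` force the inverse property for `x⁻¹ := x \ 1`, and in an
inverse property loop each of them is equivalent to `((x u) x) (x⁻¹ v) = x (u v)`. Finally
`Moufang₄` is `Moufang₃` of the opposite loop, whose `Moufang₂` is `Moufang₁` of the original one.
-/

section Moufang

variable {Q : Type*}

def Moufang₁ (mul : Q → Q → Q) : Prop :=
  ∀ x y z, mul x (mul (mul y z) x) = mul (mul x y) (mul z x)

def Moufang₂ (mul : Q → Q → Q) : Prop :=
  ∀ x y z, mul (mul x (mul y z)) x = mul (mul x y) (mul z x)

def Moufang₃ (mul : Q → Q → Q) : Prop :=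
  ∀ x y z, mul x (mul y (mul x z)) = mul (mul (mul x y) x) z

def Moufang₄ (mul : Q → Q → Q) : Prop :=
  ∀ x y z, mul (mul (mul x y) z) y = mul x (mul y (mul z y))

def Flexible (mul : Q → Q → Q) : Prop :=
  ∀ x y, mul (mul x y) x = mul x (mul y x)

structure IsLoop (mul ld rd : Q → Q → Q) (e : Q) : Prop where
  ld_mul : ∀ x y, ld x (mul x y) = y
  mul_ld : ∀ x y, mul x (ld x y) = y
  rd_mul : ∀ x y, rd (mul x y) y = x
  mul_rd : ∀ x y, mul (rd x y) y = x
  one_mul : ∀ x, mul e x = x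
  mul_one : ∀ x, mul x e = x

structure HasInverseProperty (mul : Q → Q → Q) (inv : Q → Q) : Prop where
  inv_mul_cancel_left : ∀ x y, mul (inv x) (mul x y) = y
  mul_inv_cancel_right : ∀ x y, mul (mul x y) (inv y) = x

section Unital

variable {mul : Q → Q → Q} {e : Q}

theorem Moufang₁.flexible (h : Moufang₁ mul) (one_mul : ∀ x, mul e x = x)
    (mul_one : ∀ x, mul x e = x) : Flexible mul := fun x y => by
  simpa only [mul_one, one_mul] using (h x y e).symm

theorem Moufang₂.flexible (h : Moufang₂ mul) (one_mul : ∀ x, mul e x = x)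
    (mul_one : ∀ x, mul x e = x) : Flexible mul := fun x y => by
  simpa only [mul_one, one_mul] using h x e y

theorem moufang₁_iff_moufang₂ (one_mul : ∀ x, mul e x = x) (mul_one : ∀ x, mul x e = x) :
    Moufang₁ mul ↔ Moufang₂ mul :=
  ⟨fun h x y z => (h.flexible one_mul mul_one _ _).trans (h x y z),
    fun h x y z => (h.flexible one_mul mul_one _ _).symm.trans (h x y z)⟩

end Unital

theorem moufang₂_flip_iff {mul : Q → Q → Q} : Moufang₂ (flip mul) ↔ Moufang₁ mul :=
  ⟨fun h x y z => h x z y, fun h x y z => h x z y⟩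

theorem moufang₃_flip_iff {mul : Q → Q → Q} : Moufang₃ (flip mul) ↔ Moufang₄ mul :=
  ⟨fun h x y z => h y z x, fun h x y z => h z x y⟩

namespace HasInverseProperty

variable {mul : Q → Q → Q} {inv : Q → Q} (hI : HasInverseProperty mul inv)
include hI

theorem mul_left_injective (y : Q) : Function.Injective (fun x => mul x y) := fun a b hab => by
  rw [← hI.mul_inv_cancel_right a y, show mul a y = mul b y from hab, hI.mul_inv_cancel_right]

theorem inv_inv (x : Q) : inv (inv x) = x :=
  hI.mul_left_injective x <| by
    simpa only [hI.inv_mul_cancel_left] using hI.inv_mul_cancel_left (inv x) (mul x x)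

theorem mul_inv_cancel_left (x y : Q) : mul x (mul (inv x) y) = y := by
  simpa only [hI.inv_inv] using hI.inv_mul_cancel_left (inv x) y

theorem inv_mul_cancel_right (x y : Q) : mul (mul x (inv y)) y = x := by
  simpa only [hI.inv_inv] using hI.mul_inv_cancel_right x (inv y)

theorem inv_mul (x y : Q) : inv (mul x y) = mul (inv y) (inv x) := by
  have h : mul (inv (mul x y)) x = inv y := by
    simpa only [hI.mul_inv_cancel_right] using hI.inv_mul_cancel_left (mul x y) (inv y)
  simpa only [h] using (hI.mul_inv_cancel_right (inv (mul x y)) x).symm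

theorem moufang₂_iff :
    Moufang₂ mul ↔ ∀ x u v, mul (mul (mul x u) x) (mul (inv x) v) = mul x (mul u v) := by
  have inv_mul_inv (x z : Q) : mul (inv x) (inv z) = inv (mul z x) := (hI.inv_mul z x).symm
  constructor
  · intro h x u v
    have h' := h x (mul u v) (inv v)
    rw [hI.mul_inv_cancel_right] at h'
    have hv : mul (inv x) v = inv (mul (inv v) x) := by rw [hI.inv_mul, hI.inv_inv]
    rw [h', hv, hI.mul_inv_cancel_right]
  · intro h x y z
    have h' := h x (mul y z) (inv z)
    rw [hI.mul_inv_cancel_right, inv_mul_inv] at h'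
    rw [← h', hI.inv_mul_cancel_right]

theorem moufang₃_iff :
    Moufang₃ mul ↔ ∀ x u v, mul (mul (mul x u) x) (mul (inv x) v) = mul x (mul u v) :=
  ⟨fun h x u v => by simpa only [hI.mul_inv_cancel_left] using (h x u (mul (inv x) v)).symm,
    fun h x y z => by simpa only [hI.inv_mul_cancel_left] using (h x y (mul x z)).symm⟩

theorem moufang₂_iff_moufang₃ : Moufang₂ mul ↔ Moufang₃ mul :=
  hI.moufang₂_iff.trans hI.moufang₃_iff.symm

end HasInverseProperty

namespace IsLoop

variable {mul ld rd : Q → Q → Q} {e : Q} (hQ : IsLoop mul ld rd e)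
include hQ

theorem flip : IsLoop (flip mul) (flip rd) (flip ld) e :=
  ⟨fun x y => hQ.rd_mul y x, fun x y => hQ.mul_rd y x, fun x y => hQ.ld_mul y x,
    fun x y => hQ.mul_ld y x, hQ.mul_one, hQ.one_mul⟩

theorem mul_right_injective (x : Q) : Function.Injective (mul x) := fun a b hab => by
  rw [← hQ.ld_mul x a, hab, hQ.ld_mul]

theorem mul_left_injective (y : Q) : Function.Injective (fun x => mul x y) := fun a b hab => by
  rw [← hQ.rd_mul a y, show mul a y = mul b y from hab, hQ.rd_mul]

theorem hasInverseProperty_of_moufang₂ (h : Moufang₂ mul) :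
    HasInverseProperty mul (fun x => ld x e) := by
  have flex := h.flexible hQ.one_mul hQ.mul_one
  have mul_inv_cancel_left (x z : Q) : mul x (mul (ld x e) z) = z :=
    hQ.mul_left_injective x <| by simpa only [hQ.mul_ld, hQ.one_mul] using h x (ld x e) z
  refine ⟨fun x w => hQ.mul_right_injective x (mul_inv_cancel_left x _), fun w x => ?_⟩
  have inv_mul_cancel (x : Q) : mul (ld x e) x = e :=
    hQ.mul_right_injective x <| by rw [hQ.mul_one, ← flex, hQ.mul_ld, hQ.one_mul]
  -- `w x = w / x⁻¹`, read off from `Moufang₂` at `y = w / x⁻¹`, `z = x⁻¹`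
  have mul_eq_rd : mul w x = rd w (ld x e) := hQ.mul_right_injective x <| by
    rw [← flex]
    simpa only [hQ.mul_rd, inv_mul_cancel, hQ.mul_one] using h x (rd w (ld x e)) (ld x e)
  rw [mul_eq_rd, hQ.mul_rd]

theorem hasInverseProperty_of_moufang₃ (h : Moufang₃ mul) :
    HasInverseProperty mul (fun x => ld x e) := by
  have inv_mul_cancel_left (x w : Q) : mul (ld x e) (mul x w) = w :=
    hQ.mul_right_injective x <| by simpa only [hQ.mul_ld, hQ.one_mul] using h x (ld x e) w
  refine ⟨inv_mul_cancel_left, fun w x => ?_⟩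
  have mul_inv_eq_rd (u : Q) : mul u (ld x e) = rd u x := by
    simpa only [hQ.mul_ld, hQ.mul_rd, hQ.mul_one] using (h x (ld x (rd u x)) (ld x e)).symm
  rw [mul_inv_eq_rd, hQ.rd_mul]

theorem moufang₂_iff_moufang₃ : Moufang₂ mul ↔ Moufang₃ mul :=
  ⟨fun h => (hQ.hasInverseProperty_of_moufang₂ h).moufang₂_iff_moufang₃.mp h,
    fun h => (hQ.hasInverseProperty_of_moufang₃ h).moufang₂_iff_moufang₃.mpr h⟩

end IsLoop

end Moufang

/-- In a loop, the four Moufang identities are pairwise equivalent. -/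
theorem moufang_identities_equivalent_in_loops (Q : Type*) (mul ld rd : Q → Q → Q) (e : Q)
    (hQ1 : ∀ x y, ld x (mul x y) = y) (hQ2 : ∀ x y, mul x (ld x y) = y)
    (hQ3 : ∀ x y, rd (mul x y) y = x) (hQ4 : ∀ x y, mul (rd x y) y = x)
    (hL : ∀ x, mul e x = x) (hR : ∀ x, mul x e = x) :
    ((∀ x y z, mul x (mul (mul y z) x) = mul (mul x y) (mul z x)) ↔
      (∀ x y z, mul (mul x (mul y z)) x = mul (mul x y) (mul z x))) ∧
    ((∀ x y z, mul x (mul (mul y z) x) = mul (mul x y) (mul z x)) ↔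
      (∀ x y z, mul x (mul y (mul x z)) = mul (mul (mul x y) x) z)) ∧
    ((∀ x y z, mul x (mul (mul y z) x) = mul (mul x y) (mul z x)) ↔
      (∀ x y z, mul (mul (mul x y) z) y = mul x (mul y (mul z y)))) := by
  have hQ : IsLoop mul ld rd e := ⟨hQ1, hQ2, hQ3, hQ4, hL, hR⟩
  have h₁₂ : Moufang₁ mul ↔ Moufang₂ mul := moufang₁_iff_moufang₂ hL hR
  have h₁₃ : Moufang₁ mul ↔ Moufang₃ mul := h₁₂.trans hQ.moufang₂_iff_moufang₃
  have h₁₄ : Moufang₁ mul ↔ Moufang₄ mul :=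
    moufang₂_flip_iff.symm.trans (hQ.flip.moufang₂_iff_moufang₃.trans moufang₃_flip_iff)
  exact ⟨h₁₂, h₁₃, h₁₄⟩
end

section
/- A quasigroup satisfying the extra-loop identity $((xy)z)x = x(y(zx))$ has a two-sided neutral element, i.e., is a loop. -/
/-!
Two consequences of the extra law drive the proof: `x f = x` forces `f x = x`, and every
idempotent is a right identity. Hence `e = x \ x` satisfies `e x = x = x e`; then `e \ e` acts on
`x` as `e` does, so `e \ e = e` and `e` is idempotent, hence a two-sided identity.
-/

namespace ExtraQuasigroup

variable {Q : Type*} {mul ld rd : Q → Q → Q}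

local infixl:70 " ⋆ " => mul

theorem cancel_left (hQ1 : ∀ x y, ld x (x ⋆ y) = y) {a b c : Q} (h : a ⋆ b = a ⋆ c) :
    b = c := by
  rw [← hQ1 a b, h, hQ1]

theorem cancel_right (hQ3 : ∀ x y, rd (x ⋆ y) y = x) {a b c : Q} (h : a ⋆ c = b ⋆ c) :
    a = b := by
  rw [← hQ3 a c, h, hQ3]

theorem mul_eq_right_of_mul_eq_left
    (hQ1 : ∀ x y, ld x (x ⋆ y) = y) (hQ2 : ∀ x y, x ⋆ ld x y = y)
    (hQ3 : ∀ x y, rd (x ⋆ y) y = x) (hQ4 : ∀ x y, rd x y ⋆ y = x)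
    (hid : ∀ x y z, x ⋆ y ⋆ z ⋆ x = x ⋆ (y ⋆ (z ⋆ x))) {f x : Q} (hxf : x ⋆ f = x) :
    f ⋆ x = x := by
  set d := rd f x
  set c := ld x f
  have hdx : d ⋆ x = f := hQ4 f x
  have hxc : x ⋆ c = f := hQ2 x f
  have hfdx : f ⋆ d ⋆ x = f := by
    have h := hid f d x
    rw [hxf, hdx] at h
    exact cancel_right hQ3 h
  have hcf : c ⋆ f = c := by
    have h := hid x c d
    rw [hxc, hfdx, hdx] at h
    exact cancel_left hQ1 (h.symm.trans hxc.symm)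
  have h := hid f x c
  rw [hcf, hxc] at h
  exact cancel_right hQ3 ((cancel_right hQ3 h).trans hxc.symm)

theorem mul_self_eq_of_mul_eq_right_of_mul_eq_left
    (hQ1 : ∀ x y, ld x (x ⋆ y) = y) (hQ2 : ∀ x y, x ⋆ ld x y = y)
    (hQ3 : ∀ x y, rd (x ⋆ y) y = x)
    (hid : ∀ x y z, x ⋆ y ⋆ z ⋆ x = x ⋆ (y ⋆ (z ⋆ x))) {e x : Q}
    (hex : e ⋆ x = x) (hxe : x ⋆ e = x) :
    e ⋆ e = e := by
  have h := hid e (ld e e) x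
  rw [hQ2, hex, hxe] at h
  have hqx : ld e e ⋆ x = x := cancel_left hQ1 (h.symm.trans hex.symm)
  have hq : ld e e = e := cancel_right hQ3 (hqx.trans hex.symm)
  simpa only [hq] using hQ2 e e

theorem mul_eq_left_of_mul_self_eq
    (hQ2 : ∀ x y, x ⋆ ld x y = y) (hQ3 : ∀ x y, rd (x ⋆ y) y = x)
    (hid : ∀ x y z, x ⋆ y ⋆ z ⋆ x = x ⋆ (y ⋆ (z ⋆ x))) {e : Q} (hee : e ⋆ e = e)
    (w : Q) :
    w ⋆ e = w := by
  have hwe : ∀ y, y ⋆ e = e ⋆ (y ⋆ e ⋆ e) := by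
    intro y
    have h₁ := hid e (ld e y) e
    have h₂ := hid e e (ld e y)
    rw [hQ2, hee] at h₁
    rw [hee, hQ2, ← h₁] at h₂
    exact h₂
  have hwee : ∀ y, e ⋆ (y ⋆ e) ⋆ e = y := by
    intro y
    have h := hid e (y ⋆ e) e
    rw [hee, ← hwe] at h
    exact cancel_right hQ3 h
  have h := hwee (w ⋆ e)
  rw [← hwe] at h
  exact cancel_right hQ3 h

end ExtraQuasigroup

open ExtraQuasigroup

theorem extra_quasigroup_is_loop (Q : Type*) (mul ld rd : Q → Q → Q)
    (hQ1 : ∀ x y, ld x (mul x y) = y) (hQ2 : ∀ x y, mul x (ld x y) = y)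
    (hQ3 : ∀ x y, rd (mul x y) y = x) (hQ4 : ∀ x y, mul (rd x y) y = x)
    [Nonempty Q]
    (hid : ∀ x y z, mul (mul (mul x y) z) x = mul x (mul y (mul z x))) :
    ∃ e : Q, ∀ x, mul e x = x ∧ mul x e = x := by
  obtain ⟨x⟩ := ‹Nonempty Q›
  have hxe : mul x (ld x x) = x := hQ2 x x
  have hex := mul_eq_right_of_mul_eq_left hQ1 hQ2 hQ3 hQ4 hid hxe
  have hee := mul_self_eq_of_mul_eq_right_of_mul_eq_left hQ1 hQ2 hQ3 hid hex hxe
  refine ⟨ld x x, fun w => ?_⟩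
  have hwe := mul_eq_left_of_mul_self_eq hQ2 hQ3 hid hee w
  exact ⟨mul_eq_right_of_mul_eq_left hQ1 hQ2 hQ3 hQ4 hid hwe, hwe⟩
end

section
/- In a loop $Q$, the inner mapping group $\mathrm{Inn}(Q)$ (the stabilizer of the neutral element $1$ in the multiplication group $\mathrm{Mlt}(Q)$) is generated by the maps $R_xL_x^{-1}$, $R_xR_yR_{xy}^{-1}$, and $L_xL_yL_{yx}^{-1}$ for $x,y \in Q$. -/
/-!
Let `M = Mlt(Q)` act on `Q` and use `u ↦ R_u` as a section of the orbit map `M → Q` at `1`,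
so that `R_u 1 = u` and `R_1 = id`. By a Schreier-type argument, the stabilizer of `1` in `M`
is generated by the elements `R_{t u}⁻¹ t R_u` with `t` a translation and `u ∈ Q`. For `t = R_a`
these are the generators `R_{ua}⁻¹ R_a R_u`; for `t = L_a`, the element `R_{au}⁻¹ L_a R_u`
factors as `(L_{au}⁻¹ R_{au})⁻¹ (L_{au}⁻¹ L_a L_u) (L_u⁻¹ R_u)`.
-/

/-- Left translation of a quasigroup, as a permutation. -/
def leftTr {Q : Type*} (mul ld : Q → Q → Q)
    (h1 : ∀ x y, ld x (mul x y) = y) (h2 : ∀ x y, mul x (ld x y) = y)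
    (x : Q) : Equiv.Perm Q :=
  ⟨fun y => mul x y, fun y => ld x y, fun y => h1 x y, fun y => h2 x y⟩

/-- Right translation of a quasigroup, as a permutation. -/
def rightTr {Q : Type*} (mul rd : Q → Q → Q)
    (h3 : ∀ x y, rd (mul x y) y = x) (h4 : ∀ x y, mul (rd x y) y = x)
    (x : Q) : Equiv.Perm Q :=
  ⟨fun y => mul y x, fun y => rd y x, fun y => h3 y x, fun y => h4 y x⟩

section Schreier

variable {G X : Type*} [Group G] [MulAction G X] {T : Set G} {H : Subgroup G} {s : X → G}

theorem inv_mul_mul_mem_of_mem_closure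
    (hs : ∀ t ∈ T, ∀ x, (s (t • x))⁻¹ * (t * s x) ∈ H) {g : G} (hg : g ∈ Subgroup.closure T)
    (x : X) : (s (g • x))⁻¹ * (g * s x) ∈ H := by
  induction hg using Subgroup.closure_induction_left with
  | one => simp
  | mul_left t ht g _ ih =>
    have key : (s ((t * g) • x))⁻¹ * (t * g * s x) =
        (s (t • g • x))⁻¹ * (t * s (g • x)) * ((s (g • x))⁻¹ * (g * s x)) := by
      rw [mul_smul]; group
    rw [key]
    exact mul_mem (hs t ht _) ih
  | inv_mul_cancel t ht g _ ih =>
    have key : (s ((t⁻¹ * g) • x))⁻¹ * (t⁻¹ * g * s x) =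
        ((s (t • t⁻¹ • g • x))⁻¹ * (t * s (t⁻¹ • g • x)))⁻¹ *
          ((s (g • x))⁻¹ * (g * s x)) := by
      rw [smul_inv_smul, mul_smul]; group
    rw [key]
    exact mul_mem (inv_mem (hs t ht _)) ih

theorem closure_inf_stabilizer_le (hs : ∀ t ∈ T, ∀ x, (s (t • x))⁻¹ * (t * s x) ∈ H)
    {x₀ : X} (hx₀ : s x₀ = 1) : Subgroup.closure T ⊓ MulAction.stabilizer G x₀ ≤ H := by
  rintro g ⟨hg, hgx : g • x₀ = x₀⟩
  simpa [hgx, hx₀] using inv_mul_mul_mem_of_mem_closure hs hg x₀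

end Schreier

section InnerMappingGenerators

variable {Q G : Type*} [Group G]

/-- The maps `R_x L_x⁻¹`, `R_x R_y R_{xy}⁻¹`, `L_x L_y L_{yx}⁻¹` of the loop literature, which
composes maps left to right, written here with `(f * g) u = f (g u)`. -/
def innerMappingGenerators (mul : Q → Q → Q) (L R : Q → G) : Set G :=
  {φ | ∃ x, φ = (L x)⁻¹ * R x} ∪
    {φ | ∃ x y, φ = (R (mul x y))⁻¹ * (R y * R x)} ∪
    {φ | ∃ x y, φ = (L (mul y x))⁻¹ * (L y * L x)}

theorem innerMappingGenerators_subset_closure (mul : Q → Q → Q) (L R : Q → G) :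
    innerMappingGenerators mul L R ⊆ Subgroup.closure (Set.range L ∪ Set.range R) := by
  have hL x : L x ∈ Subgroup.closure (Set.range L ∪ Set.range R) :=
    Subgroup.subset_closure (Or.inl ⟨x, rfl⟩)
  have hR x : R x ∈ Subgroup.closure (Set.range L ∪ Set.range R) :=
    Subgroup.subset_closure (Or.inr ⟨x, rfl⟩)
  rintro _ ((⟨x, rfl⟩ | ⟨x, y, rfl⟩) | ⟨x, y, rfl⟩)
  · exact mul_mem (inv_mem (hL x)) (hR x)
  · exact mul_mem (inv_mem (hR _)) (mul_mem (hR y) (hR x))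
  · exact mul_mem (inv_mem (hL _)) (mul_mem (hL y) (hL x))

theorem inv_right_mul_left_mul_right_mem_closure (mul : Q → Q → Q)
    (L R : Q → G) (x y : Q) :
    (R (mul x y))⁻¹ * (L x * R y) ∈ Subgroup.closure (innerMappingGenerators mul L R) := by
  have h₁ z : (L z)⁻¹ * R z ∈ Subgroup.closure (innerMappingGenerators mul L R) :=
    Subgroup.subset_closure (Or.inl (Or.inl ⟨z, rfl⟩))
  have h₃ :
      (L (mul x y))⁻¹ * (L x * L y) ∈ Subgroup.closure (innerMappingGenerators mul L R) :=
    Subgroup.subset_closure (Or.inr ⟨y, x, rfl⟩)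
  have key : (R (mul x y))⁻¹ * (L x * R y) =
      ((L (mul x y))⁻¹ * R (mul x y))⁻¹ * ((L (mul x y))⁻¹ * (L x * L y)) *
        ((L y)⁻¹ * R y) := by
    group
  rw [key]
  exact mul_mem (mul_mem (inv_mem (h₁ _)) h₃) (h₁ y)

end InnerMappingGenerators

theorem innerMappingGenerators_subset_stabilizer {Q : Type*} {mul ld rd : Q → Q → Q} {e : Q}
    (hQ1 : ∀ x y, ld x (mul x y) = y) (hQ2 : ∀ x y, mul x (ld x y) = y)
    (hQ3 : ∀ x y, rd (mul x y) y = x) (hQ4 : ∀ x y, mul (rd x y) y = x)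
    (hL : ∀ x, mul e x = x) (hR : ∀ x, mul x e = x) :
    innerMappingGenerators mul (leftTr mul ld hQ1 hQ2) (rightTr mul rd hQ3 hQ4) ⊆
      MulAction.stabilizer (Equiv.Perm Q) e := by
  have ld_self x : ld x x = e := by simpa only [hR] using hQ1 x e
  have rd_self x : rd x x = e := by simpa only [hL] using hQ3 e x
  rintro _ ((⟨x, rfl⟩ | ⟨x, y, rfl⟩) | ⟨x, y, rfl⟩) <;>
    simp [MulAction.mem_stabilizer_iff, Equiv.Perm.smul_def, leftTr, rightTr, Equiv.Perm.inv_def,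
      hL, hR, ld_self, rd_self]

/-- the inner mapping group `Inn(Q) = Mlt(Q) ∩ Stab(e)` is generated by
the maps `R_x L_x⁻¹`, `R_x R_y R_{xy}⁻¹`, `L_x L_y L_{yx}⁻¹` (written here for a left
action, with composition `(f*g)(u) = f(g(u))`). -/
theorem inner_mapping_group_generators (Q : Type*) (mul ld rd : Q → Q → Q) (e : Q)
    (hQ1 : ∀ x y, ld x (mul x y) = y) (hQ2 : ∀ x y, mul x (ld x y) = y)
    (hQ3 : ∀ x y, rd (mul x y) y = x) (hQ4 : ∀ x y, mul (rd x y) y = x)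
    (hL : ∀ x, mul e x = x) (hR : ∀ x, mul x e = x) :
    letI L := leftTr mul ld hQ1 hQ2
    letI R := rightTr mul rd hQ3 hQ4
    Subgroup.closure
        ({φ | ∃ x, φ = (L x)⁻¹ * R x} ∪
         {φ | ∃ x y, φ = (R (mul x y))⁻¹ * (R y * R x)} ∪
         {φ | ∃ x y, φ = (L (mul y x))⁻¹ * (L y * L x)}) =
      Subgroup.closure (Set.range L ∪ Set.range R) ⊓
        MulAction.stabilizer (Equiv.Perm Q) e := by
  set L := leftTr mul ld hQ1 hQ2
  set R := rightTr mul rd hQ3 hQ4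
  change Subgroup.closure (innerMappingGenerators mul L R) = _
  apply le_antisymm
  · refine le_inf ?_ ?_ <;> rw [Subgroup.closure_le]
    · exact innerMappingGenerators_subset_closure mul L R
    · exact innerMappingGenerators_subset_stabilizer hQ1 hQ2 hQ3 hQ4 hL hR
  · refine closure_inf_stabilizer_le (s := R) ?_ (Equiv.ext hR)
    rintro _ (⟨a, rfl⟩ | ⟨a, rfl⟩) u
    · exact inv_right_mul_left_mul_right_mem_closure mul L R a u
    · exact Subgroup.subset_closure (Or.inl (Or.inr ⟨u, a, rfl⟩))
end

section
/- The factor loop of a conjugacy closed loop by its nucleus is an abelian group (Basarab's theorem). -/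
/-!
Call `(α, β, γ)` an autotopism if `α s * β t = γ (s * t)`. The LCC and RCC laws say exactly that
`(s ↦ x s / x, L_x, L_x)` and `(R_x, t ↦ x ⧹ t x, R_x)` are autotopisms; conjugating the first
(at `v / x`) by the second (at `x`) gives, for all `x, v`, an autotopism with middle map
`L_x⁻¹ L_v` and last map `L_v L_x⁻¹`. An autotopism whose middle map is the identity has last map
`L_h` with `h` left nuclear, and in a CC-loop `h s = s n` for some `n` in the nucleus `N`.
Composing three of the autotopisms above along `x, y, w` makes the middle maps telescope, so
`L_y L_x⁻¹ L_w L_y⁻¹ L_x L_w⁻¹` sends every `s` into `s N`. The triples `(y, 1, x)` and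
`(b z, b, a b)` give commutativity and associativity modulo `N`.
-/

def nucleus {Q : Type*} (mul : Q → Q → Q) : Set Q :=
  {a | ∀ x y : Q, mul a (mul x y) = mul (mul a x) y ∧
       mul x (mul a y) = mul (mul x a) y ∧
       mul x (mul y a) = mul (mul x y) a}

section Magma

variable {Q : Type*} [Mul Q]

def IsLeftNuclear (a : Q) : Prop := ∀ x y, a * (x * y) = a * x * y

def IsMiddleNuclear (a : Q) : Prop := ∀ x y, x * (a * y) = x * a * y

def IsRightNuclear (a : Q) : Prop := ∀ x y, x * (y * a) = x * y * a

theorem mem_nucleus_iff {a : Q} :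
    a ∈ nucleus (Q := Q) (· * ·) ↔ IsLeftNuclear a ∧ IsMiddleNuclear a ∧ IsRightNuclear a := by
  simp only [nucleus, Set.mem_ofPred_eq, IsLeftNuclear, IsMiddleNuclear, IsRightNuclear, forall_and]

theorem mul_mem_nucleus {a b : Q} (ha : a ∈ nucleus (Q := Q) (· * ·))
    (hb : b ∈ nucleus (Q := Q) (· * ·)) : a * b ∈ nucleus (Q := Q) (· * ·) := by
  obtain ⟨haL, haM, haR⟩ := mem_nucleus_iff.1 ha
  obtain ⟨hbL, hbM, hbR⟩ := mem_nucleus_iff.1 hb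
  refine mem_nucleus_iff.2 ⟨fun x y => ?_, fun x y => ?_, fun x y => ?_⟩
  · rw [← haL, hbL, haL, haL]
  · rw [← haL, haM, hbM, haM]
  · rw [haM, hbR, haR, haM]

def IsAutotopism (α β γ : Q → Q) : Prop := ∀ s t, α s * β t = γ (s * t)

namespace IsAutotopism

variable {α β γ α' β' γ' : Q → Q}

theorem comp (h : IsAutotopism α β γ) (h' : IsAutotopism α' β' γ') :
    IsAutotopism (α ∘ α') (β ∘ β') (γ ∘ γ') := fun s t =>
  (h (α' s) (β' t)).trans (congrArg γ (h' s t))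

theorem of_leftInverse (h : IsAutotopism α β γ) (hα : Function.LeftInverse α α')
    (hβ : Function.LeftInverse β β') (hγ : Function.LeftInverse γ' γ) :
    IsAutotopism α' β' γ' := fun s t => by
  rw [← hγ (α' s * β' t), ← h, hα, hβ]

end IsAutotopism

end Magma

namespace IsAutotopism

variable {Q : Type*} [MulOneClass Q] {α β γ : Q → Q}

theorem left_eq_right (h : IsAutotopism α β γ) (hβ : β 1 = 1) : α = γ :=
  funext fun s => by simpa [hβ] using h s 1

theorem apply_eq_apply_one_mul (h : IsAutotopism α β γ) (hβ : ∀ t, β t = t) (s : Q) :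
    γ s = γ 1 * s := by
  simpa [hβ, h.left_eq_right (hβ 1)] using (h 1 s).symm

theorem isLeftNuclear_apply_one (h : IsAutotopism α β γ) (hβ : ∀ t, β t = t) :
    IsLeftNuclear (γ 1) := fun s t => by
  have hst := h s t
  rw [hβ, h.left_eq_right (hβ 1), h.apply_eq_apply_one_mul hβ s,
    h.apply_eq_apply_one_mul hβ (s * t)] at hst
  exact hst.symm

end IsAutotopism

class Loop (Q : Type*) extends MulOneClass Q, Div Q where
  ldiv : Q → Q → Q
  ldiv_mul_cancel_left (x y : Q) : ldiv x (x * y) = y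
  mul_ldiv_cancel_left (x y : Q) : x * ldiv x y = y
  mul_div_cancel_right (x y : Q) : x * y / y = x
  div_mul_cancel_right (x y : Q) : x / y * y = x

infixl:70 " ⧹ " => Loop.ldiv

attribute [simp] Loop.ldiv_mul_cancel_left Loop.mul_ldiv_cancel_left Loop.mul_div_cancel_right
  Loop.div_mul_cancel_right

namespace Loop

variable {Q : Type*} [Loop Q]

@[simp]
theorem one_ldiv (x : Q) : 1 ⧹ x = x := by
  simpa using ldiv_mul_cancel_left 1 x

@[simp]
theorem ldiv_self (x : Q) : x ⧹ x = 1 := by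
  simpa using ldiv_mul_cancel_left x 1

instance : IsLeftCancelMul Q :=
  ⟨fun a b c h => by simpa using congrArg (a ⧹ ·) h⟩

end Loop

def IsLeftConjClosed (Q : Type*) [Loop Q] : Prop :=
  ∀ x y : Q, ∃ z, ∀ u, x ⧹ (y * (x * u)) = z * u

def IsRightConjClosed (Q : Type*) [Loop Q] : Prop :=
  ∀ x y : Q, ∃ w, ∀ u, u * x * y / x = u * w

section ConjClosed

variable {Q : Type*} [Loop Q]

namespace IsLeftConjClosed

theorem ldiv_mul_mul (hl : IsLeftConjClosed Q) (x n v : Q) :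
    x ⧹ (n * (x * v)) = x ⧹ (n * x) * v := by
  obtain ⟨z, hz⟩ := hl x n
  rw [hz, ← show x ⧹ (n * x) = z by simpa using hz 1]

theorem mul_div_mul_mul (hl : IsLeftConjClosed Q) (x y u : Q) :
    x * y / x * (x * u) = x * (y * u) := by
  have h := hl.ldiv_mul_mul x (x * y / x) u
  simp only [Loop.div_mul_cancel_right, Loop.ldiv_mul_cancel_left] at h
  rw [← h, Loop.mul_ldiv_cancel_left]

theorem isAutotopism (hl : IsLeftConjClosed Q) (x : Q) :
    IsAutotopism (fun s => x * s / x) (x * ·) (x * ·) :=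
  hl.mul_div_mul_mul x

theorem isMiddleNuclear_of_isLeftNuclear (hl : IsLeftConjClosed Q) {a : Q}
    (ha : IsLeftNuclear a) : IsMiddleNuclear a := fun s t => by
  simpa [ha _ _] using hl.mul_div_mul_mul a (a ⧹ (s * a)) t

theorem isLeftNuclear_of_isMiddleNuclear (hl : IsLeftConjClosed Q) {a : Q}
    (ha : IsMiddleNuclear a) : IsLeftNuclear a := fun s t => by
  simpa [ha _ _] using (hl.mul_div_mul_mul a s t).symm

theorem isMiddleNuclear_ldiv_mul_self (hl : IsLeftConjClosed Q) {n : Q} (hn : IsMiddleNuclear n)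
    (w : Q) : IsMiddleNuclear (w ⧹ (n * w)) := fun s t => by
  set c := w ⧹ (n * w)
  set d := w ⧹ (w * s / w * n * w)
  have hc : ∀ v, w * (c * v) = n * (w * v) := fun v => by
    rw [← hl.ldiv_mul_mul, Loop.mul_ldiv_cancel_left]
  have hd : ∀ v, s * (c * v) = d * v := fun v => mul_left_cancel <| calc
    w * (s * (c * v)) = w * s / w * (w * (c * v)) := (hl.mul_div_mul_mul w s _).symm
    _ = w * s / w * n * (w * v) := by rw [hc, hn]
    _ = w * (d * v) := by rw [← hl.ldiv_mul_mul, Loop.mul_ldiv_cancel_left]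
  rw [hd, ← show s * c = d by simpa using hd 1]

end IsLeftConjClosed

namespace IsRightConjClosed

theorem mul_mul_ldiv_mul (hr : IsRightConjClosed Q) (x s t : Q) :
    s * x * (x ⧹ (t * x)) = s * t * x := by
  obtain ⟨w, hw⟩ := hr x (x ⧹ (t * x))
  obtain rfl : t = w := by simpa using hw 1
  simpa using congrArg (· * x) (hw s)

theorem isAutotopism (hr : IsRightConjClosed Q) (x : Q) :
    IsAutotopism (· * x) (fun t => x ⧹ (t * x)) (· * x) :=
  hr.mul_mul_ldiv_mul x

theorem isRightNuclear_of_isMiddleNuclear (hr : IsRightConjClosed Q) {a : Q}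
    (ha : IsMiddleNuclear a) : IsRightNuclear a := fun s t => calc
  s * (t * a) = s * (a * (a ⧹ (t * a))) := by rw [Loop.mul_ldiv_cancel_left]
  _ = s * a * (a ⧹ (t * a)) := ha _ _
  _ = s * t * a := hr.mul_mul_ldiv_mul a s t

end IsRightConjClosed

theorem mem_nucleus_of_isMiddleNuclear (hl : IsLeftConjClosed Q) (hr : IsRightConjClosed Q)
    {a : Q} (ha : IsMiddleNuclear a) :
    a ∈ nucleus (Q := Q) (· * ·) :=
  mem_nucleus_iff.2 ⟨hl.isLeftNuclear_of_isMiddleNuclear ha, ha,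
    hr.isRightNuclear_of_isMiddleNuclear ha⟩

theorem exists_mem_nucleus_mul_eq_mul (hl : IsLeftConjClosed Q) (hr : IsRightConjClosed Q)
    {a : Q} (ha : IsLeftNuclear a) (w : Q) :
    ∃ n ∈ nucleus (Q := Q) (· * ·), a * w = w * n :=
  ⟨w ⧹ (a * w), mem_nucleus_of_isMiddleNuclear hl hr <|
    hl.isMiddleNuclear_ldiv_mul_self (hl.isMiddleNuclear_of_isLeftNuclear ha) w,
    (Loop.mul_ldiv_cancel_left w _).symm⟩

theorem exists_isAutotopism_ldiv_mul (hl : IsLeftConjClosed Q) (hr : IsRightConjClosed Q)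
    (x v : Q) :
    ∃ α, IsAutotopism α (fun t => x ⧹ (v * t)) (fun s => v * (x ⧹ s)) := by
  set u := v / x
  have hB := hr.isAutotopism x
  have hB' : IsAutotopism (· / x) (fun t => x * t / x) (· / x) :=
    hB.of_leftInverse (fun s => by simp) (fun t => by simp) (fun s => by simp)
  have hβ : ∀ t, u * (x * t / x) * x = v * t := fun t => by
    simpa [u] using (hB u (x * t / x)).symm
  have hγ : ∀ s, u * (s / x) * x = v * (x ⧹ s) := fun s => by
    simpa [u] using (hB u (s / x)).symm
  refine ⟨fun s => u * (s / x) / u * x, fun s t => ?_⟩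
  simpa only [Function.comp_apply, hβ, hγ] using (hB.comp (hl.isAutotopism u)).comp hB' s t

theorem exists_mem_nucleus_mul_ldiv_mul (hl : IsLeftConjClosed Q) (hr : IsRightConjClosed Q)
    (x y w s : Q) :
    ∃ n ∈ nucleus (Q := Q) (· * ·), y * (x ⧹ (w * (y ⧹ (x * (w ⧹ s))))) = s * n := by
  obtain ⟨α₁, h₁⟩ := exists_isAutotopism_ldiv_mul hl hr x y
  obtain ⟨α₂, h₂⟩ := exists_isAutotopism_ldiv_mul hl hr y w
  obtain ⟨α₃, h₃⟩ := exists_isAutotopism_ldiv_mul hl hr w x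
  have h := h₁.comp (h₂.comp h₃)
  have hβ : ∀ t, x ⧹ (y * (y ⧹ (w * (w ⧹ (x * t))))) = t := fun t => by simp
  have hs : y * (x ⧹ (w * (y ⧹ (x * (w ⧹ s))))) = _ * s := h.apply_eq_apply_one_mul hβ s
  rw [hs]
  exact exists_mem_nucleus_mul_eq_mul hl hr (h.isLeftNuclear_apply_one hβ) s

theorem exists_mem_nucleus_mul_eq_mul_mul (hl : IsLeftConjClosed Q) (hr : IsRightConjClosed Q)
    (x y : Q) :
    ∃ n ∈ nucleus (Q := Q) (· * ·), x * y = y * x * n := by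
  obtain ⟨n, hn, h⟩ := exists_mem_nucleus_mul_ldiv_mul hl hr y 1 x x
  simp only [Loop.ldiv_self, mul_one, one_mul, Loop.one_ldiv] at h
  refine ⟨n, hn, ?_⟩
  rw [← (mem_nucleus_iff.1 hn).2.2, ← h, Loop.mul_ldiv_cancel_left]

theorem exists_mem_nucleus_mul_mul_eq_mul_mul (hl : IsLeftConjClosed Q) (hr : IsRightConjClosed Q)
    (a b z : Q) :
    ∃ n ∈ nucleus (Q := Q) (· * ·), a * b * z = a * (b * z) * n := by
  obtain ⟨m, hm, h⟩ := exists_mem_nucleus_mul_ldiv_mul hl hr (b * z) b (a * b) (a * b)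
  obtain ⟨m₁, hm₁, hab⟩ := exists_mem_nucleus_mul_eq_mul_mul hl hr a b
  obtain ⟨m₂, hm₂, hbza⟩ := exists_mem_nucleus_mul_eq_mul_mul hl hr (b * z) a
  have hm₁m := mul_mem_nucleus hm₁ hm
  have hquot : (b * z) ⧹ (a * b * z) = a * (m₁ * m) := mul_left_cancel <| calc
    b * ((b * z) ⧹ (a * b * z)) = a * b * m := by simpa using h
    _ = b * a * (m₁ * m) := by rw [hab, (mem_nucleus_iff.1 hm).2.2]
    _ = b * (a * (m₁ * m)) := ((mem_nucleus_iff.1 hm₁m).2.2 b a).symm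
  refine ⟨m₂ * (m₁ * m), mul_mem_nucleus hm₂ hm₁m, ?_⟩
  calc a * b * z = b * z * (a * (m₁ * m)) := by rw [← hquot, Loop.mul_ldiv_cancel_left]
    _ = a * (b * z) * m₂ * (m₁ * m) := by rw [(mem_nucleus_iff.1 hm₁m).2.2, hbza]
    _ = a * (b * z) * (m₂ * (m₁ * m)) := ((mem_nucleus_iff.1 hm₁m).2.2 _ _).symm

end ConjClosed

/-- Basarab: the factor loop of a conjugacy closed loop by its
nucleus is an abelian group; equivalently, modulo the nucleus `N(Q)` the
multiplication is commutative and associative. -/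
theorem cc_loop_mod_nucleus_abelian_group (Q : Type*) (mul ld rd : Q → Q → Q) (e : Q)
    (hQ1 : ∀ x y, ld x (mul x y) = y) (hQ2 : ∀ x y, mul x (ld x y) = y)
    (hQ3 : ∀ x y, rd (mul x y) y = x) (hQ4 : ∀ x y, mul (rd x y) y = x)
    (hL : ∀ x, mul e x = x) (hR : ∀ x, mul x e = x)
    -- conjugacy closedness: conjugates of left (right) translations are
    -- left (right) translations
    (hCCL : ∀ x y, ∃ z, ∀ u, ld x (mul y (mul x u)) = mul z u)
    (hCCR : ∀ x y, ∃ w, ∀ u, rd (mul (mul u x) y) x = mul u w) :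
    (∀ x y, ∃ n ∈ nucleus mul, mul x y = mul (mul y x) n) ∧
    (∀ x y z, ∃ n ∈ nucleus mul, mul (mul x y) z = mul (mul x (mul y z)) n) := by
  let _ : Loop Q :=
    { mul := mul, one := e, div := rd, ldiv := ld, one_mul := hL, mul_one := hR
      ldiv_mul_cancel_left := hQ1, mul_ldiv_cancel_left := hQ2
      mul_div_cancel_right := hQ3, div_mul_cancel_right := hQ4 }
  exact ⟨exists_mem_nucleus_mul_eq_mul_mul hCCL hCCR,
    exists_mem_nucleus_mul_mul_eq_mul_mul hCCL hCCR⟩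
end

section
/- Every conjugacy closed loop is a G-loop: every principal isotope of a CC-loop $Q$ is isomorphic to $Q$. -/
/-!
Conjugacy closedness gives `L_z L_x = L_{(zx)/z} L_z` and dually `R_z R_y = R_{z\(yz)} R_z`.
With `c = a\(ba)`, so that `(ac)/a = b`, these two identities show that the bijection
`x ↦ a(xc)` carries the product of `Q` to the isotope `x ∘ y = (x/a)(b\y)`; its inverse is the
required isomorphism.
-/

namespace CCLoop

variable {Q : Type*} (mul ld rd : Q → Q → Q)

theorem mul_mul_eq_of_conj_closed_left (e : Q)
    (hQ1 : ∀ x y, ld x (mul x y) = y) (hQ2 : ∀ x y, mul x (ld x y) = y)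
    (hQ4 : ∀ x y, mul (rd x y) y = x) (hR : ∀ x, mul x e = x)
    (hCCL : ∀ x y, ∃ z, ∀ u, ld x (mul y (mul x u)) = mul z u) (z x y : Q) :
    mul z (mul x y) = mul (rd (mul z x) z) (mul z y) := by
  obtain ⟨w, hw⟩ := hCCL z (rd (mul z x) z)
  -- Evaluating the conjugated translation at `e` identifies it as `L_x`.
  have hwx : w = x := by simpa only [hR, hQ4, hQ1, eq_comm] using hw e
  rw [← hQ2 z (mul (rd (mul z x) z) (mul z y)), hw y, hwx]

theorem mul_mul_eq_of_conj_closed_right (e : Q)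
    (hQ2 : ∀ x y, mul x (ld x y) = y) (hQ3 : ∀ x y, rd (mul x y) y = x)
    (hQ4 : ∀ x y, mul (rd x y) y = x) (hL : ∀ x, mul e x = x)
    (hCCR : ∀ x y, ∃ w, ∀ u, rd (mul (mul u x) y) x = mul u w) (z x y : Q) :
    mul (mul x y) z = mul (mul x z) (ld z (mul y z)) :=
  -- The left identity in the opposite loop `x ⬝ y = y x`, whose divisions are `rd` and `ld` flipped.
  mul_mul_eq_of_conj_closed_left (fun x y => mul y x) (fun x y => rd y x) (fun x y => ld y x) e
    (fun x y => hQ3 y x) (fun x y => hQ4 y x) (fun x y => hQ2 y x) hL hCCR z y x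

theorem mul_mul_mul_eq_isotope
    (hQ1 : ∀ x y, ld x (mul x y) = y) (hQ2 : ∀ x y, mul x (ld x y) = y)
    (hA : ∀ z x y, mul z (mul x y) = mul (rd (mul z x) z) (mul z y))
    (hB : ∀ z x y, mul (mul x y) z = mul (mul x z) (ld z (mul y z))) (a c x y : Q) :
    mul a (mul (mul x y) c) =
      mul (rd (mul a (mul x c)) a) (ld (rd (mul a c) a) (mul a (mul y c))) := by
  have hy : ld (rd (mul a c) a) (mul a (mul y c)) = mul a (ld c (mul y c)) := by
    rw [← hQ1 (rd (mul a c) a) (mul a (ld c (mul y c))), ← hA, hQ2]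
  rw [hy, ← hA, hB]

end CCLoop

/-- every conjugacy closed loop is a G-loop: every principal isotope
`x ∘ y = (x/a)(b\y)` of a CC-loop `Q` is isomorphic to `Q`. -/
theorem cc_loop_is_Gloop (Q : Type*) (mul ld rd : Q → Q → Q) (e : Q)
    (hQ1 : ∀ x y, ld x (mul x y) = y) (hQ2 : ∀ x y, mul x (ld x y) = y)
    (hQ3 : ∀ x y, rd (mul x y) y = x) (hQ4 : ∀ x y, mul (rd x y) y = x)
    (hL : ∀ x, mul e x = x) (hR : ∀ x, mul x e = x)
    (hCCL : ∀ x y, ∃ z, ∀ u, ld x (mul y (mul x u)) = mul z u)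
    (hCCR : ∀ x y, ∃ w, ∀ u, rd (mul (mul u x) y) x = mul u w) :
    ∀ a b : Q, ∃ f : Q ≃ Q, ∀ x y : Q,
      f (mul (rd x a) (ld b y)) = mul (f x) (f y) := by
  intro a b
  set c := ld a (mul b a)
  have hb : rd (mul a c) a = b := by rw [hQ2, hQ3]
  let ψ : Q ≃ Q :=
    ⟨fun x => mul a (mul x c), fun y => rd (ld a y) c,
      fun x => by simp only [hQ1, hQ3], fun y => by simp only [hQ4, hQ2]⟩
  have hψ : ∀ x y, ψ (mul x y) = mul (rd (ψ x) a) (ld b (ψ y)) := fun x y => by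
    rw [← hb]
    exact CCLoop.mul_mul_mul_eq_isotope mul ld rd hQ1 hQ2
      (CCLoop.mul_mul_eq_of_conj_closed_left mul ld rd e hQ1 hQ2 hQ4 hR hCCL)
      (CCLoop.mul_mul_eq_of_conj_closed_right mul ld rd e hQ2 hQ3 hQ4 hL hCCR) a c x y
  refine ⟨ψ.symm, fun x y => ?_⟩
  rw [Equiv.symm_apply_eq, hψ, Equiv.apply_symm_apply, Equiv.apply_symm_apply]
end

section
/- The identity $[w((x^{-1}w)^{-1}z)][(yz)^{-1}y] = x$ is a single axiom for group theory: a set with a binary operation $\cdot$ and unary operation ${}^{-1}$ satisfying this identity (for all $w,x,y,z$) is a group, i.e., $\cdot$ is associative, there is a two-sided neutral element, and ${}^{-1}$ gives two-sided inverses. Conversely, every group satisfies this identity. -/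
/-!
Write the axiom as `𝔗 w x z * 𝔣 y z = x` with `𝔗 w x z = w * ((x⁻¹ * w)⁻¹ * z)` and
`𝔣 y z = (y * z)⁻¹ * y`; in a group these are `x * z` and `z⁻¹`, so the axiom is
`x * z * z⁻¹ = x` in disguise. Substituting the axiom into itself gives cancellation laws for
the two factors, then that `x * x⁻¹` is a constant `e` with `e⁻¹ = e`, that `x⁻¹⁻¹ = x` and
that `e` is a two-sided identity. From these, `𝔣 y z = z⁻¹` and `𝔗 w x z = x * z`, and
associativity follows as `x * y * z = 𝔗 (x * y) x (y * z) = x * (y * z)`.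
-/

def McCuneAxiom (G : Type*) [Mul G] [Inv G] : Prop :=
  ∀ w x y z : G, w * ((x⁻¹ * w)⁻¹ * z) * ((y * z)⁻¹ * y) = x

theorem McCuneAxiom.of_group (G : Type*) [Group G] : McCuneAxiom G := by
  intro w x y z
  group

namespace McCuneAxiom

variable {G : Type*} [Mul G] [Inv G]

-- The two factors of the axiom; lemma names call them `leftFactor` and `rightFactor`.
local notation:max "𝔗" w:max x:max z:max => w * ((x⁻¹ * w)⁻¹ * z)
local notation:max "𝔣" y:max z:max => (y * z)⁻¹ * y

theorem leftFactor_rightFactor_mul_inv_mul_leftFactor (h : McCuneAxiom G) (w x y z u v : G) :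
    𝔗 w x (𝔣 y z) * (u⁻¹ * 𝔗 v u z) = x := by
  have := h w x (𝔗 v u z) (𝔣 y z)
  rwa [h v u y z] at this

theorem mul_mul_inv_mul_inv_inv_mul_cancel (h : McCuneAxiom G) (u x y : G) :
    x * y * (y⁻¹ * (u⁻¹ * x)⁻¹) = u := by
  set a := (u⁻¹ * x)⁻¹
  set W := 𝔗 u a (𝔣 u u)
  set Z := 𝔗 u (y⁻¹ * W) u
  have hW : 𝔗 W y Z = a := leftFactor_rightFactor_mul_inv_mul_leftFactor h u a u u (y⁻¹ * W) u
  -- every `y` is a right multiple of `a`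
  have hC : a * 𝔣 u Z = y := by simpa only [hW] using h W y u Z
  have := leftFactor_rightFactor_mul_inv_mul_leftFactor h x u u Z y W
  rwa [hW, hC] at this

theorem leftFactor_mul_inv_inv_mul_leftFactor (h : McCuneAxiom G) (x z w t : G) :
    𝔗 x (x * z) (w⁻¹ * 𝔗 t x z)⁻¹ = w := by
  have := mul_mul_inv_mul_inv_inv_mul_cancel h w (𝔗 t x z) (𝔣 x z)
  rwa [h t x x z] at this

theorem mul_rightFactor_inv_mul_leftFactor (h : McCuneAxiom G) (x z w v t : G) :
    w * 𝔣 v (w⁻¹ * 𝔗 t x z)⁻¹ = x * z := by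
  have := h x (x * z) v (w⁻¹ * 𝔗 t x z)⁻¹
  rwa [leftFactor_mul_inv_inv_mul_leftFactor h] at this

theorem mul_inv_mul_rightFactor_mul_cancel (h : McCuneAxiom G) (x y z u : G) :
    x * ((y * 𝔣 z (y⁻¹ * x)⁻¹)⁻¹ * u) = u := by
  have on_products : ∀ a b, x * ((y * 𝔣 z (y⁻¹ * x)⁻¹)⁻¹ * (a * b)) = a * b := by
    intro a b
    have hab : y * 𝔣 z (y⁻¹ * x)⁻¹ = a * b * (x⁻¹ * 𝔗 a a b)⁻¹ := by
      have := mul_rightFactor_inv_mul_leftFactor h (a * b) (x⁻¹ * 𝔗 a a b)⁻¹ y z a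
      rwa [leftFactor_mul_inv_inv_mul_leftFactor h] at this
    have := mul_rightFactor_inv_mul_leftFactor h a b x (a * b) a
    rwa [← hab] at this
  -- every element is a product, by the axiom itself
  simpa only [h u u u u] using on_products (𝔗 u u u) (𝔣 u u)

theorem leftFactor_mul_inv_mul_cancel (h : McCuneAxiom G) (w x z u : G) :
    𝔗 w x z * ((x * z)⁻¹ * u) = u := by
  have := mul_inv_mul_rightFactor_mul_cancel h (𝔗 w x z) u u u
  rwa [mul_rightFactor_inv_mul_leftFactor h] at this

theorem leftFactor_mul_rightFactor (h : McCuneAxiom G) (w x y z : G) :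
    𝔗 w (x * 𝔣 y z) z = x := by
  have := leftFactor_mul_inv_mul_cancel h w x (𝔣 y z) (𝔗 w (x * 𝔣 y z) z)
  rw [leftFactor_rightFactor_mul_inv_mul_leftFactor h] at this
  exact this.symm

theorem mul_rightFactor_eq_mul_rightFactor (h : McCuneAxiom G) (u y y' z : G) :
    u * 𝔣 y z = u * 𝔣 y' z := by
  have := h u (u * 𝔣 y' z) y z
  rwa [leftFactor_mul_rightFactor h] at this

theorem rightFactor_inv_mul_inv_mul_cancel (h : McCuneAxiom G) (x y u : G) :
    𝔣 x y⁻¹ * (y⁻¹ * u) = u := by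
  have := leftFactor_mul_inv_mul_cancel h (𝔣 x y⁻¹) (𝔣 x y⁻¹ * 𝔣 y⁻¹ (𝔣 x y⁻¹)) (𝔣 x y⁻¹) u
  rwa [leftFactor_mul_rightFactor h, h (𝔣 x y⁻¹) y x y⁻¹] at this

theorem inv_inv_mul_inv_mul_inv (h : McCuneAxiom G) (x y : G) :
    (x⁻¹ * (y * y⁻¹)⁻¹)⁻¹ = x := by
  have := rightFactor_inv_mul_inv_mul_cancel h y y (x⁻¹ * (y * y⁻¹)⁻¹)⁻¹
  rw [mul_mul_inv_mul_inv_inv_mul_cancel h] at this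
  exact this.symm

theorem rightFactor_mul_mul_cancel (h : McCuneAxiom G) (x y u : G) :
    𝔣 x y * (y * u) = u := by
  have := rightFactor_inv_mul_inv_mul_cancel h x (y⁻¹ * (y * y⁻¹)⁻¹) u
  rwa [inv_inv_mul_inv_mul_inv h] at this

theorem mul_inv_self_mul_inv_mul_inv_self_mul_cancel (h : McCuneAxiom G) (x y u : G) :
    x * x⁻¹ * ((y * y⁻¹)⁻¹ * u) = u := by
  have := rightFactor_inv_mul_inv_mul_cancel h x⁻¹ (y * y⁻¹) u
  rwa [inv_inv_mul_inv_mul_inv h] at this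

theorem mul_inv_inv_mul_inv_self_mul_mul_cancel (h : McCuneAxiom G) (x y u : G) :
    x * (((y * y⁻¹)⁻¹ * x)⁻¹ * u) = u := by
  have := mul_inv_mul_rightFactor_mul_cancel h x (y * y⁻¹) ((y * y⁻¹)⁻¹ * x) u
  rwa [mul_inv_self_mul_inv_mul_inv_self_mul_cancel h y ((y * y⁻¹)⁻¹ * x)] at this

theorem mul_rightFactor_eq_mul_inv_self (h : McCuneAxiom G) (x y z : G) :
    x * 𝔣 y x = z * z⁻¹ := by
  have := h x (z * z⁻¹) y x
  rwa [mul_inv_inv_mul_inv_self_mul_mul_cancel h] at this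

theorem mul_inv_self_eq (h : McCuneAxiom G) (x y : G) : x * x⁻¹ = y * y⁻¹ :=
  (mul_rightFactor_eq_mul_inv_self h x x x).symm.trans (mul_rightFactor_eq_mul_inv_self h x x y)

theorem inv_mul_inv_self (h : McCuneAxiom G) (x y : G) : (x * x⁻¹)⁻¹ = y * y⁻¹ := by
  have := mul_rightFactor_eq_mul_inv_self h x (x * x⁻¹)⁻¹ y
  rwa [mul_inv_inv_mul_inv_self_mul_mul_cancel h] at this

theorem inv_inv_mul_mul_inv_self (h : McCuneAxiom G) (x y : G) : (x⁻¹ * (y * y⁻¹))⁻¹ = x := by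
  simpa only [inv_mul_inv_self h y y] using inv_inv_mul_inv_mul_inv h x y

theorem mul_inv_mul_inv_self_mul_cancel (h : McCuneAxiom G) (x y u : G) :
    x * ((y * y⁻¹ * x)⁻¹ * u) = u := by
  simpa only [inv_mul_inv_self h y y] using mul_inv_inv_mul_inv_self_mul_mul_cancel h x y u

theorem mul_inv_self_mul_mul_inv_mul_cancel (h : McCuneAxiom G) (x y u : G) :
    y * y⁻¹ * x * (x⁻¹ * u) = u := by
  simpa only [inv_mul_inv_self h x y] using rightFactor_inv_mul_inv_mul_cancel h x x u

theorem inv_inv_mul (h : McCuneAxiom G) (x u : G) : x⁻¹⁻¹ * u = x * u := by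
  have mul_inv_self_mul_rightFactor (z : G) : x * x⁻¹ * 𝔣 z x⁻¹ = x := by
    have := mul_inv_self_mul_inv_mul_inv_self_mul_cancel h x x x
    rwa [mul_rightFactor_eq_mul_rightFactor h (x * x⁻¹) x z x⁻¹] at this
  have mul_inv_rightFactor_mul_cancel (z v : G) : x * ((𝔣 z x⁻¹)⁻¹ * v) = v := by
    have := mul_inv_self_mul_mul_inv_mul_cancel h (𝔣 z x⁻¹) x v
    rwa [mul_inv_self_mul_rightFactor] at this
  have := mul_inv_rightFactor_mul_cancel (x * x⁻¹) (x⁻¹⁻¹ * u)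
  rw [inv_inv_mul_mul_inv_self h, mul_inv_self_mul_mul_inv_mul_cancel h] at this
  exact this.symm

theorem inv_inv (h : McCuneAxiom G) (x : G) : x⁻¹⁻¹ = x :=
  calc x⁻¹⁻¹ = (x⁻¹⁻¹⁻¹ * (x * x⁻¹))⁻¹ := (inv_inv_mul_mul_inv_self h x⁻¹⁻¹ x).symm
    _ = (x⁻¹ * (x * x⁻¹))⁻¹ := by rw [inv_inv_mul h]
    _ = x := inv_inv_mul_mul_inv_self h x x

theorem mul_mul_inv_self (h : McCuneAxiom G) (x y : G) : x * (y * y⁻¹) = x := by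
  have := congrArg (·⁻¹) (inv_inv_mul_mul_inv_self h x⁻¹ y)
  simpa only [inv_inv h] using this

theorem mul_inv_mul_self (h : McCuneAxiom G) (x y : G) : x * (y⁻¹ * y) = x := by
  simpa only [inv_inv h] using mul_mul_inv_self h x y⁻¹

theorem mul_inv_self_mul (h : McCuneAxiom G) (x y : G) : y * y⁻¹ * x = x :=
  calc y * y⁻¹ * x = x * ((y * y⁻¹ * x)⁻¹ * (y * y⁻¹ * x)) :=
        (mul_inv_mul_inv_self_mul_cancel h x y _).symm
    _ = x := mul_inv_mul_self h x _

theorem mul_inv_cancel_left (h : McCuneAxiom G) (x y : G) : y * (y⁻¹ * x) = x := by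
  simpa only [mul_inv_self_mul h] using mul_inv_mul_inv_self_mul_cancel h y y x

theorem inv_mul_self_eq (h : McCuneAxiom G) (x y : G) : x⁻¹ * x = y * y⁻¹ := by
  simpa only [inv_inv h] using mul_inv_self_eq h x⁻¹ y

theorem rightFactor_eq_inv (h : McCuneAxiom G) (x y : G) : 𝔣 x y = y⁻¹ :=
  (mul_mul_inv_self h _ y).symm.trans (rightFactor_mul_mul_cancel h x y y⁻¹)

theorem inv_inv_mul_eq_inv_mul (h : McCuneAxiom G) (x y : G) : (x⁻¹ * y)⁻¹ = y⁻¹ * x := by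
  simpa only [mul_inv_cancel_left h] using (rightFactor_eq_inv h x (x⁻¹ * y)).symm

theorem leftFactor_eq_mul (h : McCuneAxiom G) (w x z : G) : 𝔗 w x z = x * z :=
  calc 𝔗 w x z = 𝔗 w x z * ((x * z)⁻¹ * (x * z)) := (mul_inv_mul_self h _ _).symm
    _ = x * z := leftFactor_mul_inv_mul_cancel h w x z (x * z)

theorem mul_assoc (h : McCuneAxiom G) (x y z : G) : x * y * z = x * (y * z) :=
  calc x * y * z = x * y * (𝔣 x y * (y * z)) := by rw [rightFactor_mul_mul_cancel h]
    _ = 𝔗 (x * y) x (y * z) := by rw [inv_inv_mul_eq_inv_mul h]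
    _ = x * (y * z) := leftFactor_eq_mul h _ _ _

end McCuneAxiom

/-- McCune: `[w((x⁻¹w)⁻¹z)][(yz)⁻¹y] = x` is a single axiom for
group theory in terms of product and inverse. -/
theorem mccune_single_axiom (G : Type*) [Nonempty G] (mul : G → G → G) (inv : G → G) :
    (∀ w x y z : G,
        mul (mul w (mul (inv (mul (inv x) w)) z)) (mul (inv (mul y z)) y) = x) ↔
      ((∀ x y z : G, mul x (mul y z) = mul (mul x y) z) ∧
       ∃ e : G, (∀ x, mul e x = x ∧ mul x e = x) ∧
         ∀ x, mul x (inv x) = e ∧ mul (inv x) x = e) := by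
  let _ : Mul G := ⟨mul⟩
  let _ : Inv G := ⟨inv⟩
  constructor
  · intro (h : McCuneAxiom G)
    obtain ⟨a⟩ := ‹Nonempty G›
    exact ⟨fun x y z => (h.mul_assoc x y z).symm, a * a⁻¹,
      fun x => ⟨h.mul_inv_self_mul x a, h.mul_mul_inv_self x a⟩,
      fun x => ⟨h.mul_inv_self_eq x a, h.inv_mul_self_eq x a⟩⟩
  · rintro ⟨assoc, e, he, hinv⟩
    let _ : One G := ⟨e⟩
    let _ : Group G := Group.ofLeftAxioms (fun a b c => (assoc a b c).symm)
      (fun a => (he a).1) (fun a => (hinv a).2)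
    exact McCuneAxiom.of_group G
end
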